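/- arXiv:2207.08863 — 2 statements merged into one kernel-verified Lean document; each statement's English description precedes it below -/
import Mathlib

section
/- Let W be a smooth vector field on ℝ³ satisfying the eighth-order equation (1 - l₁²Δ)(1 - l₂²Δ)Δ²W = -b/μ. Define u := (1/α)(1 - l₂²Δ)∇(∇·W) - (1 - l₁²Δ)∇×(∇×W). Then u satisfies the strain gradient elasticity equilibrium equation α(1 - l₁²Δ)∇(∇·u) - (1 - l₂²Δ)∇×(∇×u) = -b/μ. -/
open MeasureTheory Real

noncomputable section

abbrev V3 := Fin 3 → ℝ

/-- partial derivative in direction `i` -/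
def pd (i : Fin 3) (f : V3 → ℝ) (x : V3) : ℝ := fderiv ℝ f x (Pi.single i 1)

/-- gradient of a scalar field -/
def gradF (f : V3 → ℝ) : V3 → V3 := fun x i => pd i f x

/-- divergence of a vector field -/
def dvgF (v : V3 → V3) : V3 → ℝ := fun x => ∑ i, pd i (fun y => v y i) x

/-- Laplacian of a scalar field -/
def lapF (f : V3 → ℝ) : V3 → ℝ := fun x => ∑ i, pd i (fun y => pd i f y) x

/-- componentwise Laplacian of a vector field -/
def vlapF (v : V3 → V3) : V3 → V3 := fun x i => lapF (fun y => v y i) x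

/-- curl of a vector field -/
def curlF (v : V3 → V3) : V3 → V3 := fun x =>
  ![pd 1 (fun y => v y 2) x - pd 2 (fun y => v y 1) x,
    pd 2 (fun y => v y 0) x - pd 0 (fun y => v y 2) x,
    pd 0 (fun y => v y 1) x - pd 1 (fun y => v y 0) x]

/-- modified Helmholtz operator `(1 - s Δ)` on scalar fields (`s` is the squared length) -/
def hS (s : ℝ) (f : V3 → ℝ) : V3 → ℝ := fun x => f x - s * lapF f x

/-- modified Helmholtz operator `(1 - s Δ)` on vector fields (`s` is the squared length) -/
def hV (s : ℝ) (v : V3 → V3) : V3 → V3 := fun x => v x - s • vlapF v x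

/-- Euclidean norm on `Fin 3 → ℝ` -/
def enorm3 (x : V3) : ℝ := Real.sqrt (∑ i, (x i) ^ 2)

namespace SGETaux

abbrev Sm (f : V3 → ℝ) : Prop := ContDiff ℝ (⊤ : ℕ∞) f
abbrev SmV (v : V3 → V3) : Prop := ContDiff ℝ (⊤ : ℕ∞) v

lemma contDiff_pd {f : V3 → ℝ} (hf : Sm f) (i : Fin 3) : Sm (pd i f) :=
  (ContinuousLinearMap.apply ℝ ℝ ((Pi.single i 1 : V3))).contDiff.comp (hf.fderiv_right (by simp))

lemma pd_comm {f : V3 → ℝ} (hf : Sm f) (i j : Fin 3) (x : V3) :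
    pd i (pd j f) x = pd j (pd i f) x := by
  have hd : Differentiable ℝ (fderiv ℝ f) := (hf.fderiv_right (m := 1) (WithTop.coe_le_coe.mpr le_top)).differentiable one_ne_zero
  have key : ∀ k l : Fin 3, pd k (pd l f) x
      = fderiv ℝ (fderiv ℝ f) x (Pi.single k 1) (Pi.single l 1) := by
    intro k l
    have h1 : pd l f = fun y => (fderiv ℝ f y) ((fun _ => (Pi.single l 1 : V3)) y) := rfl
    have : fderiv ℝ (pd l f) x = (fderiv ℝ (fderiv ℝ f) x).flip (Pi.single l 1) := by
      rw [h1, fderiv_clm_apply (hd x) (differentiableAt_const _)]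
      simp
    simp only [pd, this, ContinuousLinearMap.flip_apply]
  rw [key i j, key j i]
  exact (hf.contDiffAt.isSymmSndFDerivAt (by rw [minSmoothness_of_isRCLikeNormedField]; exact WithTop.coe_le_coe.mpr (le_top : (2:ℕ∞) ≤ ⊤))) _ _

lemma pd_sub {f g : V3 → ℝ} (hf : Sm f) (hg : Sm g) (i : Fin 3) (x : V3) :
    pd i (fun y => f y - g y) x = pd i f x - pd i g x := by
  simp only [pd]
  rw [fderiv_fun_sub (hf.differentiable (by simp) x) (hg.differentiable (by simp) x)]
  rfl

lemma pd_neg (f : V3 → ℝ) (i : Fin 3) (x : V3) :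
    pd i (fun y => -f y) x = -pd i f x := by
  simp only [pd]
  rw [fderiv_fun_neg]
  rfl

lemma pd_const_mul {f : V3 → ℝ} (hf : Sm f) (c : ℝ) (i : Fin 3) (x : V3) :
    pd i (fun y => c * f y) x = c * pd i f x := by
  simp only [pd]
  rw [fderiv_const_mul (hf.differentiable (by simp) x)]
  rfl

lemma pd_sum {F : Fin 3 → V3 → ℝ} (hF : ∀ j, Sm (F j)) (i : Fin 3) (x : V3) :
    pd i (fun y => ∑ j, F j y) x = ∑ j, pd i (F j) x := by
  simp only [pd]
  rw [fderiv_fun_sum (fun j _ => (hF j).differentiable (by simp) x)]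
  rfl

lemma contDiff_lap {f : V3 → ℝ} (hf : Sm f) : Sm (lapF f) :=
  ContDiff.sum fun i _ => contDiff_pd (contDiff_pd hf i) i

lemma contDiff_grad {f : V3 → ℝ} (hf : Sm f) : SmV (gradF f) :=
  contDiff_pi.mpr fun i => contDiff_pd hf i

lemma contDiff_dvg {v : V3 → V3} (hv : SmV v) : Sm (dvgF v) :=
  ContDiff.sum fun i _ => contDiff_pd (contDiff_pi.mp hv i) i

lemma contDiff_vlap {v : V3 → V3} (hv : SmV v) : SmV (vlapF v) :=
  contDiff_pi.mpr fun i => contDiff_lap (contDiff_pi.mp hv i)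

lemma contDiff_hS {f : V3 → ℝ} (hf : Sm f) (s : ℝ) : Sm (hS s f) :=
  hf.sub (contDiff_const.mul (contDiff_lap hf))

lemma contDiff_hV {v : V3 → V3} (hv : SmV v) (s : ℝ) : SmV (hV s v) :=
  hv.sub ((contDiff_vlap hv).const_smul s)

lemma contDiff_curl {v : V3 → V3} (hv : SmV v) : SmV (curlF v) := by
  refine contDiff_pi.mpr fun j => ?_
  have h := contDiff_pi.mp hv
  fin_cases j <;>
    simp only [curlF, Matrix.cons_val_zero, Matrix.cons_val_one, Matrix.head_cons,
      Fin.isValue, Matrix.cons_val_two, Matrix.tail_cons] <;>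
    exact (contDiff_pd (h _) _).sub (contDiff_pd (h _) _)

lemma lap_sub {f g : V3 → ℝ} (hf : Sm f) (hg : Sm g) (x : V3) :
    lapF (fun y => f y - g y) x = lapF f x - lapF g x := by
  simp only [lapF]
  rw [← Finset.sum_sub_distrib]
  refine Finset.sum_congr rfl fun i _ => ?_
  have e : (fun y => pd i (fun z => f z - g z) y) = fun y => pd i f y - pd i g y :=
    funext fun y => pd_sub hf hg i y
  rw [e, pd_sub (contDiff_pd hf i) (contDiff_pd hg i)]

lemma lap_neg (f : V3 → ℝ) (x : V3) :
    lapF (fun y => -f y) x = -lapF f x := by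
  simp only [lapF]
  rw [← Finset.sum_neg_distrib]
  refine Finset.sum_congr rfl fun i _ => ?_
  have e : (fun y => pd i (fun z => -f z) y) = fun y => -pd i f y :=
    funext fun y => pd_neg f i y
  rw [e, pd_neg]

lemma lap_const_mul {f : V3 → ℝ} (hf : Sm f) (c : ℝ) (x : V3) :
    lapF (fun y => c * f y) x = c * lapF f x := by
  simp only [lapF]
  rw [Finset.mul_sum]
  refine Finset.sum_congr rfl fun i _ => ?_
  have e : (fun y => pd i (fun z => c * f z) y) = fun y => c * pd i f y :=
    funext fun y => pd_const_mul hf c i y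
  rw [e, pd_const_mul (contDiff_pd hf i)]

lemma lap_sum {F : Fin 3 → V3 → ℝ} (hF : ∀ j, Sm (F j)) (x : V3) :
    lapF (fun y => ∑ j, F j y) x = ∑ j, lapF (F j) x := by
  simp only [lapF]
  rw [Finset.sum_comm]
  refine Finset.sum_congr rfl fun i _ => ?_
  have e : (fun y => pd i (fun z => ∑ j, F j z) y) = fun y => ∑ j, pd i (F j) y :=
    funext fun y => pd_sum hF i y
  rw [e, pd_sum (fun j => contDiff_pd (hF j) i)]

lemma pd_lap_comm {f : V3 → ℝ} (hf : Sm f) (i : Fin 3) (x : V3) :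
    pd i (lapF f) x = lapF (pd i f) x := by
  have e1 : lapF f = fun y => ∑ j, pd j (pd j f) y := rfl
  rw [e1, pd_sum (fun j => contDiff_pd (contDiff_pd hf j) j)]
  simp only [lapF]
  refine Finset.sum_congr rfl fun j _ => ?_
  rw [pd_comm (contDiff_pd hf j) i j]
  congr 1
  funext y
  exact pd_comm hf i j y

lemma hV_apply (s : ℝ) (v : V3 → V3) (x : V3) (i : Fin 3) :
    hV s v x i = v x i - s * lapF (fun y => v y i) x := rfl

lemma hV_comp (s : ℝ) (v : V3 → V3) (hv : SmV v) (i : Fin 3) :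
    (fun y => hV s v y i) = fun y => v y i - s * lapF (fun z => v z i) y := rfl

lemma pd_hS {f : V3 → ℝ} (hf : Sm f) (s : ℝ) (i : Fin 3) (x : V3) :
    pd i (hS s f) x = hS s (pd i f) x := by
  have h1 : pd i (hS s f) x = pd i f x - s * pd i (lapF f) x := by
    unfold hS
    rw [pd_sub hf (contDiff_const.mul (contDiff_lap hf)) i x,
      pd_const_mul (contDiff_lap hf) s i x]
  rw [h1, pd_lap_comm hf i x]
  rfl

lemma grad_hS {f : V3 → ℝ} (hf : Sm f) (s : ℝ) (x : V3) :
    gradF (hS s f) x = hV s (gradF f) x := by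
  funext i
  show pd i (hS s f) x = _
  rw [pd_hS hf s i x, hV_apply]
  rfl

lemma vlap_grad {f : V3 → ℝ} (hf : Sm f) (x : V3) :
    vlapF (gradF f) x = gradF (lapF f) x :=
  funext fun i => (pd_lap_comm hf i x).symm

lemma vlap_hV {v : V3 → V3} (hv : SmV v) (s : ℝ) (x : V3) :
    vlapF (hV s v) x = hV s (vlapF v) x := by
  funext i
  have h := contDiff_pi.mp hv i
  show lapF (fun y => hV s v y i) x = _
  rw [hV_comp s v hv i]
  rw [lap_sub h (contDiff_const.mul (contDiff_lap h)) x, lap_const_mul (contDiff_lap h) s x]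
  rfl

lemma hV_comm {v : V3 → V3} (hv : SmV v) (s t : ℝ) (x : V3) :
    hV s (hV t v) x = hV t (hV s v) x := by
  funext i
  have h := contDiff_pi.mp hv i
  have key : ∀ a b : ℝ, hV a (hV b v) x i
      = v x i - b * lapF (fun y => v y i) x
        - a * (lapF (fun y => v y i) x - b * lapF (lapF (fun y => v y i)) x) := by
    intro a b
    rw [hV_apply, hV_apply, hV_comp b v hv i,
      lap_sub h (contDiff_const.mul (contDiff_lap h)) x, lap_const_mul (contDiff_lap h) b x]
  rw [key s t, key t s]
  ring

lemma hV_smul {v : V3 → V3} (hv : SmV v) (c s : ℝ) (x : V3) :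
    hV s (fun y => c • v y) x = c • hV s v x := by
  funext i
  have h := contDiff_pi.mp hv i
  have e : (fun y => (c • v y) i) = fun y => c * v y i := by
    funext y; simp
  simp only [hV_apply, Pi.smul_apply, smul_eq_mul, e, lap_const_mul h c x]
  ring

lemma hV_sub {A B : V3 → V3} (hA : SmV A) (hB : SmV B) (s : ℝ) (x : V3) :
    hV s (fun y => A y - B y) x = hV s A x - hV s B x := by
  funext i
  have hAi := contDiff_pi.mp hA i
  have hBi := contDiff_pi.mp hB i
  have e : (fun y => (A y - B y) i) = fun y => A y i - B y i := by
    funext y; simp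
  simp only [hV_apply, Pi.sub_apply, e, lap_sub hAi hBi x]
  ring

lemma hV_neg {v : V3 → V3} (hv : SmV v) (s : ℝ) (x : V3) :
    hV s (fun y => -v y) x = -hV s v x := by
  funext i
  have e : (fun y => (-v y) i) = fun y => -(v y i) := by funext y; simp
  simp only [hV_apply, Pi.neg_apply, e, lap_neg]
  ring

lemma dvg_sub_smul {A B : V3 → V3} (hA : SmV A) (hB : SmV B) (c : ℝ) (x : V3) :
    dvgF (fun y => c • A y - B y) x = c * dvgF A x - dvgF B x := by
  unfold dvgF
  have key : ∀ i : Fin 3, pd i (fun y => (c • A y - B y) i) x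
      = c * pd i (fun y => A y i) x - pd i (fun y => B y i) x := by
    intro i
    have hAi := contDiff_pi.mp hA i
    have hBi := contDiff_pi.mp hB i
    have e : (fun y => (c • A y - B y) i) = fun y => c * A y i - B y i := by
      funext y; simp
    rw [e, pd_sub (contDiff_const.mul hAi) hBi, pd_const_mul hAi]
  rw [Finset.sum_congr rfl (fun i _ => key i), Finset.sum_sub_distrib, Finset.mul_sum]

lemma dvg_hV {v : V3 → V3} (hv : SmV v) (s : ℝ) (x : V3) :
    dvgF (hV s v) x = hS s (dvgF v) x := by
  unfold dvgF
  have key : ∀ i : Fin 3, pd i (fun y => hV s v y i) x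
      = pd i (fun y => v y i) x - s * lapF (pd i (fun y => v y i)) x := by
    intro i
    have h := contDiff_pi.mp hv i
    rw [hV_comp s v hv i, pd_sub h (contDiff_const.mul (contDiff_lap h)),
      pd_const_mul (contDiff_lap h), pd_lap_comm h]
  rw [Finset.sum_congr rfl (fun i _ => key i), Finset.sum_sub_distrib, ← Finset.mul_sum]
  have e2 : ∑ i, lapF (pd i (fun y => v y i)) x
      = lapF (fun y => ∑ i, pd i (fun z => v z i) y) x := by
    rw [lap_sum (fun j => contDiff_pd (contDiff_pi.mp hv j) j) x]
  rw [e2]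
  rfl

lemma curl0 (v : V3 → V3) (x : V3) :
    curlF v x 0 = pd 1 (fun y => v y 2) x - pd 2 (fun y => v y 1) x := rfl
lemma curl1 (v : V3 → V3) (x : V3) :
    curlF v x 1 = pd 2 (fun y => v y 0) x - pd 0 (fun y => v y 2) x := rfl
lemma curl2 (v : V3 → V3) (x : V3) :
    curlF v x 2 = pd 0 (fun y => v y 1) x - pd 1 (fun y => v y 0) x := rfl

lemma curlc0 (v : V3 → V3) :
    (fun y => curlF v y 0) = fun y => pd 1 (fun z => v z 2) y - pd 2 (fun z => v z 1) y := rfl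
lemma curlc1 (v : V3 → V3) :
    (fun y => curlF v y 1) = fun y => pd 2 (fun z => v z 0) y - pd 0 (fun z => v z 2) y := rfl
lemma curlc2 (v : V3 → V3) :
    (fun y => curlF v y 2) = fun y => pd 0 (fun z => v z 1) y - pd 1 (fun z => v z 0) y := rfl

lemma grad_const_mul {f : V3 → ℝ} (hf : Sm f) (c : ℝ) (x : V3) :
    gradF (fun y => c * f y) x = c • gradF f x := by
  funext i
  show pd i (fun y => c * f y) x = _
  rw [pd_const_mul hf c i x]
  rfl

lemma vlap_sub {A B : V3 → V3} (hA : SmV A) (hB : SmV B) (x : V3) :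
    vlapF (fun y => A y - B y) x = vlapF A x - vlapF B x := by
  funext i
  have e : (fun y => (A y - B y) i) = fun y => A y i - B y i := by funext y; simp
  show lapF (fun y => (A y - B y) i) x = _
  rw [e, lap_sub (contDiff_pi.mp hA i) (contDiff_pi.mp hB i) x]
  rfl

lemma curl_grad {f : V3 → ℝ} (hf : Sm f) (x : V3) :
    curlF (gradF f) x = 0 := by
  funext i
  fin_cases i
  · show pd 1 (pd 2 f) x - pd 2 (pd 1 f) x = 0
    rw [sub_eq_zero]; exact pd_comm hf 1 2 x
  · show pd 2 (pd 0 f) x - pd 0 (pd 2 f) x = 0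
    rw [sub_eq_zero]; exact pd_comm hf 2 0 x
  · show pd 0 (pd 1 f) x - pd 1 (pd 0 f) x = 0
    rw [sub_eq_zero]; exact pd_comm hf 0 1 x

lemma dvg_curl {v : V3 → V3} (hv : SmV v) (x : V3) : dvgF (curlF v) x = 0 := by
  have h := contDiff_pi.mp hv
  unfold dvgF
  rw [Fin.sum_univ_three, curlc0, curlc1, curlc2,
    pd_sub (contDiff_pd (h 2) 1) (contDiff_pd (h 1) 2),
    pd_sub (contDiff_pd (h 0) 2) (contDiff_pd (h 2) 0),
    pd_sub (contDiff_pd (h 1) 0) (contDiff_pd (h 0) 1)]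
  have c2 := pd_comm (h 2) 0 1 x
  have c1 := pd_comm (h 1) 0 2 x
  have c0 := pd_comm (h 0) 1 2 x
  linarith

lemma curl_vlap {v : V3 → V3} (hv : SmV v) (x : V3) :
    curlF (vlapF v) x = vlapF (curlF v) x := by
  have h := contDiff_pi.mp hv
  funext i
  have key : ∀ a b : Fin 3,
      pd a (fun y => vlapF v y b) x - pd b (fun y => vlapF v y a) x
        = lapF (fun y => pd a (fun z => v z b) y - pd b (fun z => v z a) y) x := by
    intro a b
    have ea : (fun y => vlapF v y b) = lapF (fun z => v z b) := rfl
    have eb : (fun y => vlapF v y a) = lapF (fun z => v z a) := rfl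
    rw [ea, eb, lap_sub (contDiff_pd (h b) a) (contDiff_pd (h a) b) x,
      pd_lap_comm (h b) a x, pd_lap_comm (h a) b x]
  fin_cases i
  · show curlF (vlapF v) x 0 = vlapF (curlF v) x 0
    rw [curl0]
    show _ = lapF (fun y => curlF v y 0) x
    rw [curlc0]
    exact key 1 2
  · show curlF (vlapF v) x 1 = vlapF (curlF v) x 1
    rw [curl1]
    show _ = lapF (fun y => curlF v y 1) x
    rw [curlc1]
    exact key 2 0
  · show curlF (vlapF v) x 2 = vlapF (curlF v) x 2
    rw [curl2]
    show _ = lapF (fun y => curlF v y 2) x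
    rw [curlc2]
    exact key 0 1

lemma curl_hV {v : V3 → V3} (hv : SmV v) (s : ℝ) (x : V3) :
    curlF (hV s v) x = hV s (curlF v) x := by
  have h := contDiff_pi.mp hv
  have key : ∀ a b : Fin 3,
      pd a (fun y => hV s v y b) x - pd b (fun y => hV s v y a) x
        = (pd a (fun z => v z b) x - pd b (fun z => v z a) x)
          - s * lapF (fun y => pd a (fun z => v z b) y - pd b (fun z => v z a) y) x := by
    intro a b
    rw [hV_comp s v hv b, hV_comp s v hv a,
      pd_sub (h b) (contDiff_const.mul (contDiff_lap (h b))),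
      pd_sub (h a) (contDiff_const.mul (contDiff_lap (h a))),
      pd_const_mul (contDiff_lap (h b)), pd_const_mul (contDiff_lap (h a)),
      pd_lap_comm (h b), pd_lap_comm (h a),
      lap_sub (contDiff_pd (h b) a) (contDiff_pd (h a) b)]
    ring
  funext i
  fin_cases i
  · show curlF (hV s v) x 0 = hV s (curlF v) x 0
    rw [curl0, hV_apply, curl0, curlc0]
    exact key 1 2
  · show curlF (hV s v) x 1 = hV s (curlF v) x 1
    rw [curl1, hV_apply, curl1, curlc1]
    exact key 2 0
  · show curlF (hV s v) x 2 = hV s (curlF v) x 2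
    rw [curl2, hV_apply, curl2, curlc2]
    exact key 0 1

lemma curl_sub_smul {A B : V3 → V3} (hA : SmV A) (hB : SmV B) (c : ℝ) (x : V3) :
    curlF (fun y => c • A y - B y) x = c • curlF A x - curlF B x := by
  have hAi := contDiff_pi.mp hA
  have hBi := contDiff_pi.mp hB
  have key : ∀ a b : Fin 3, pd a (fun y => (c • A y - B y) b) x
      = c * pd a (fun z => A z b) x - pd a (fun z => B z b) x := by
    intro a b
    have e : (fun y => (c • A y - B y) b) = fun y => c * A y b - B y b := by
      funext y; simp
    rw [e, pd_sub (contDiff_const.mul (hAi b)) (hBi b), pd_const_mul (hAi b)]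
  funext i
  fin_cases i
  · show curlF (fun y => c • A y - B y) x 0 = (c • curlF A x - curlF B x) 0
    rw [curl0, key 1 2, key 2 1, Pi.sub_apply, Pi.smul_apply, smul_eq_mul, curl0, curl0]
    ring
  · show curlF (fun y => c • A y - B y) x 1 = (c • curlF A x - curlF B x) 1
    rw [curl1, key 2 0, key 0 2, Pi.sub_apply, Pi.smul_apply, smul_eq_mul, curl1, curl1]
    ring
  · show curlF (fun y => c • A y - B y) x 2 = (c • curlF A x - curlF B x) 2
    rw [curl2, key 0 1, key 1 0, Pi.sub_apply, Pi.smul_apply, smul_eq_mul, curl2, curl2]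
    ring

lemma curl_sub {A B : V3 → V3} (hA : SmV A) (hB : SmV B) (x : V3) :
    curlF (fun y => A y - B y) x = curlF A x - curlF B x := by
  have e : (fun y => A y - B y) = fun y => (1 : ℝ) • A y - B y := by
    funext y; simp
  rw [e, curl_sub_smul hA hB 1 x, one_smul]

lemma curl_curl {v : V3 → V3} (hv : SmV v) (x : V3) :
    curlF (curlF v) x = gradF (dvgF v) x - vlapF v x := by
  have h := contDiff_pi.mp hv
  have hdvg : ∀ a : Fin 3, pd a (dvgF v) x
      = pd a (pd 0 (fun z => v z 0)) x + pd a (pd 1 (fun z => v z 1)) x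
        + pd a (pd 2 (fun z => v z 2)) x := by
    intro a
    have e : dvgF v = fun y => ∑ j, pd j (fun z => v z j) y := rfl
    rw [e, pd_sum (fun j => contDiff_pd (h j) j), Fin.sum_univ_three]
  have hlap : ∀ a : Fin 3, lapF (fun z => v z a) x
      = pd 0 (pd 0 (fun z => v z a)) x + pd 1 (pd 1 (fun z => v z a)) x
        + pd 2 (pd 2 (fun z => v z a)) x := by
    intro a
    show ∑ j, pd j (pd j (fun z => v z a)) x = _
    rw [Fin.sum_univ_three]
  funext i
  fin_cases i
  · show curlF (curlF v) x 0 = (gradF (dvgF v) x - vlapF v x) 0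
    rw [curl0, curlc2, curlc1,
      pd_sub (contDiff_pd (h 1) 0) (contDiff_pd (h 0) 1),
      pd_sub (contDiff_pd (h 0) 2) (contDiff_pd (h 2) 0)]
    show _ = pd 0 (dvgF v) x - lapF (fun z => v z 0) x
    rw [hdvg 0, hlap 0]
    have c1 := pd_comm (h 1) 0 1 x
    have c2 := pd_comm (h 2) 0 2 x
    linarith
  · show curlF (curlF v) x 1 = (gradF (dvgF v) x - vlapF v x) 1
    rw [curl1, curlc0, curlc2,
      pd_sub (contDiff_pd (h 2) 1) (contDiff_pd (h 1) 2),
      pd_sub (contDiff_pd (h 1) 0) (contDiff_pd (h 0) 1)]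
    show _ = pd 1 (dvgF v) x - lapF (fun z => v z 1) x
    rw [hdvg 1, hlap 1]
    have c2 := pd_comm (h 2) 1 2 x
    have c0 := pd_comm (h 0) 0 1 x
    linarith
  · show curlF (curlF v) x 2 = (gradF (dvgF v) x - vlapF v x) 2
    rw [curl2, curlc1, curlc0,
      pd_sub (contDiff_pd (h 0) 2) (contDiff_pd (h 2) 0),
      pd_sub (contDiff_pd (h 2) 1) (contDiff_pd (h 1) 2)]
    show _ = pd 2 (dvgF v) x - lapF (fun z => v z 2) x
    rw [hdvg 2, hlap 2]
    have c0 := pd_comm (h 0) 0 2 x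
    have c1 := pd_comm (h 1) 1 2 x
    linarith

lemma pd_const (c : ℝ) (i : Fin 3) (x : V3) : pd i (fun _ => c) x = 0 := by
  simp [pd]

lemma lap_zero (x : V3) : lapF (fun _ => (0:ℝ)) x = 0 := by
  unfold lapF
  refine Finset.sum_eq_zero fun i _ => ?_
  have e : (fun y => pd i (fun _ => (0:ℝ)) y) = fun _ => (0:ℝ) :=
    funext fun y => pd_const 0 i y
  rw [e, pd_const]

lemma hS_zero (s : ℝ) (x : V3) : hS s (fun _ => (0:ℝ)) x = 0 := by
  unfold hS
  rw [lap_zero]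
  ring

end SGETaux

open SGETaux in
/-- The Boussinesq–Galerkin displacement generated by a Galerkin stress function `W`
satisfying the eighth-order equation solves the SGET equilibrium equation. -/
theorem stmt4 (α μ l₁ l₂ : ℝ) (hα : α ≠ 0) (hμ : 0 < μ)
    (W b : V3 → V3) (hW : ContDiff ℝ (⊤ : ℕ∞) W) (hb : ContDiff ℝ (⊤ : ℕ∞) b)
    (heq : ∀ x, hV (l₁^2) (hV (l₂^2) (vlapF (vlapF W))) x = -(1/μ) • b x)
    (u : V3 → V3)
    (hu : u = fun y => (1/α) • hV (l₂^2) (gradF (dvgF W)) y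
                        - hV (l₁^2) (curlF (curlF W)) y) :
    ∀ x, α • hV (l₁^2) (gradF (dvgF u)) x - hV (l₂^2) (curlF (curlF u)) x
        = -(1/μ) • b x := by
  have hg : Sm (dvgF W) := contDiff_dvg hW
  have hP : SmV (gradF (dvgF W)) := contDiff_grad hg
  have hQ : SmV (vlapF W) := contDiff_vlap hW
  have hC : SmV (curlF W) := contDiff_curl hW
  have hC2 : SmV (curlF (curlF W)) := contDiff_curl hC
  have h2 : Sm (hS (l₂^2) (dvgF W)) := contDiff_hS hg _
  have hG2 : SmV (gradF (hS (l₂^2) (dvgF W))) := contDiff_grad h2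
  have hL : Sm (lapF (hS (l₂^2) (dvgF W))) := contDiff_lap h2
  -- rewrite u
  have hu' : u = fun y => (1/α) • gradF (hS (l₂^2) (dvgF W)) y
      - hV (l₁^2) (curlF (curlF W)) y := by
    rw [hu]
    funext y
    rw [grad_hS hg]
  -- divergence of u
  have hdu : dvgF u = fun y => (1/α) * lapF (hS (l₂^2) (dvgF W)) y := by
    funext y
    rw [hu', dvg_sub_smul hG2 (contDiff_hV hC2 _) (1/α) y]
    have e1 : dvgF (gradF (hS (l₂^2) (dvgF W))) y = lapF (hS (l₂^2) (dvgF W)) y := rfl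
    have e2 : dvgF (hV (l₁^2) (curlF (curlF W))) y
        = hS (l₁^2) (dvgF (curlF (curlF W))) y := dvg_hV hC2 _ y
    have e4 : dvgF (curlF (curlF W)) = fun _ => (0:ℝ) :=
      funext fun z => dvg_curl hC z
    rw [e1, e2, e4, hS_zero]
    ring
  -- gradient of divergence of u
  have hgdu : gradF (dvgF u)
      = fun y => (1/α) • hV (l₂^2) (vlapF (gradF (dvgF W))) y := by
    funext y
    rw [hdu, grad_const_mul hL (1/α) y]
    congr 1
    rw [← vlap_grad h2 y]
    have eG : gradF (hS (l₂^2) (dvgF W)) = fun z => hV (l₂^2) (gradF (dvgF W)) z :=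
      funext fun z => grad_hS hg _ z
    rw [eG]
    exact vlap_hV hP _ y
  -- curl of u
  have hcu : curlF u = fun y => hV (l₁^2) (vlapF (curlF W)) y := by
    funext y
    rw [hu', curl_sub_smul hG2 (contDiff_hV hC2 _) (1/α) y, curl_grad h2 y,
      curl_hV hC2 _ y]
    have eC2 : curlF (curlF W) = fun z => gradF (dvgF W) z - vlapF W z :=
      funext fun z => curl_curl hW z
    have e5 : curlF (curlF (curlF W)) = fun z => -(vlapF (curlF W) z) := by
      funext z
      rw [eC2, curl_sub hP hQ z, curl_grad hg z, curl_vlap hW z, zero_sub]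
    rw [e5, hV_neg (contDiff_vlap hC) _ y]
    simp
  -- curl curl u
  have hccu : curlF (curlF u) = fun y => hV (l₁^2) (vlapF (curlF (curlF W))) y := by
    funext y
    rw [hcu, curl_hV (contDiff_vlap hC) _ y]
    have e7 : curlF (vlapF (curlF W)) = fun z => vlapF (curlF (curlF W)) z :=
      funext fun z => curl_vlap hC z
    rw [e7]
  intro x
  -- term 1
  have t1 : α • hV (l₁^2) (gradF (dvgF u)) x
      = hV (l₁^2) (hV (l₂^2) (vlapF (gradF (dvgF W)))) x := by
    rw [hgdu, hV_smul (contDiff_hV (contDiff_vlap hP) _) (1/α) _ x, smul_smul,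
      mul_one_div_cancel hα, one_smul]
  -- term 2
  have eC2 : curlF (curlF W) = fun z => gradF (dvgF W) z - vlapF W z :=
    funext fun z => curl_curl hW z
  have e6 : vlapF (curlF (curlF W))
      = fun z => vlapF (gradF (dvgF W)) z - vlapF (vlapF W) z := by
    funext z
    rw [eC2]
    exact vlap_sub hP hQ z
  have t2 : hV (l₂^2) (curlF (curlF u)) x
      = hV (l₁^2) (hV (l₂^2) (vlapF (gradF (dvgF W)))) x
        - hV (l₁^2) (hV (l₂^2) (vlapF (vlapF W))) x := by
    rw [hccu]
    have e8 : (fun y => hV (l₁^2) (vlapF (curlF (curlF W))) y)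
        = fun y => hV (l₁^2) (vlapF (gradF (dvgF W))) y
            - hV (l₁^2) (vlapF (vlapF W)) y := by
      funext y
      rw [e6, hV_sub (contDiff_vlap hP) (contDiff_vlap hQ) _ y]
    rw [e8, hV_sub (contDiff_hV (contDiff_vlap hP) _) (contDiff_hV (contDiff_vlap hQ) _) _ x,
      hV_comm (contDiff_vlap hP) _ _ x, hV_comm (contDiff_vlap hQ) _ _ x]
  rw [t1, t2, sub_sub_cancel]
  exact heq x
end
end

section
/- Papkovich–Neuber completeness direction for strain gradient elasticity: suppose smooth fields B_c, φ_c, B_g, φ_g satisfy ΔB_c = -b/μ, Δφ_c = (r·b)/μ + 2l₁²(1-2ν)(∇·b)/μ, (1 - l₂²Δ)B_g = -l₂² b/μ with ∇·B_g = 0, and (1 - l₁²Δ)φ_g = -l₁²((1-2ν)/(2(1-ν)))(∇·b)/μ. Then u := B_c - (1/(4(1-ν)))∇(r·B_c + φ_c) + B_g + l₁²∇φ_g satisfies the equilibrium equation α(1 - l₁²Δ)∇(∇·u) - (1 - l₂²Δ)∇×(∇×u) = -b/μ, where α = 2(1-ν)/(1-2ν). -/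
open MeasureTheory Real

noncomputable section

/-! ### Auxiliary lemmas -/

section Aux

lemma cd_pd {f : V3 → ℝ} (hf : ContDiff ℝ (⊤ : ℕ∞) f) (i : Fin 3) : ContDiff ℝ (⊤ : ℕ∞) (pd i f) :=
  (hf.fderiv_right (by simp)).clm_apply contDiff_const

lemma pd_add {f g : V3 → ℝ} (hf : Differentiable ℝ f) (hg : Differentiable ℝ g) (i : Fin 3) (x : V3) :
    pd i (fun y => f y + g y) x = pd i f x + pd i g x := by
  unfold pd; rw [fderiv_fun_add (hf x) (hg x)]; rfl

lemma pd_sub {f g : V3 → ℝ} (hf : Differentiable ℝ f) (hg : Differentiable ℝ g) (i : Fin 3) (x : V3) :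
    pd i (fun y => f y - g y) x = pd i f x - pd i g x := by
  unfold pd; rw [fderiv_fun_sub (hf x) (hg x)]; rfl

lemma pd_const_mul {f : V3 → ℝ} (hf : Differentiable ℝ f) (c : ℝ) (i : Fin 3) (x : V3) :
    pd i (fun y => c * f y) x = c * pd i f x := by
  unfold pd; rw [fderiv_const_mul (hf x)]; rfl

lemma pd_mul {f g : V3 → ℝ} (hf : Differentiable ℝ f) (hg : Differentiable ℝ g) (i : Fin 3) (x : V3) :
    pd i (fun y => f y * g y) x = f x * pd i g x + g x * pd i f x := by
  unfold pd; rw [fderiv_fun_mul (hf x) (hg x)]; rfl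

lemma pd_sum {f : Fin 3 → V3 → ℝ} (hf : ∀ j, Differentiable ℝ (f j)) (i : Fin 3) (x : V3) :
    pd i (fun y => ∑ j, f j y) x = ∑ j, pd i (f j) x := by
  unfold pd; rw [fderiv_fun_sum (fun j _ => hf j x)]; simp

lemma pd_const (c : ℝ) (i : Fin 3) (x : V3) : pd i (fun _ => c) x = 0 := by
  unfold pd; rw [fderiv_fun_const]; rfl

lemma pd_coord (i j : Fin 3) (x : V3) : pd i (fun y : V3 => y j) x = if j = i then 1 else 0 := by
  unfold pd
  have : fderiv ℝ (fun y : V3 => y j) x = ContinuousLinearMap.proj j :=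
    (ContinuousLinearMap.proj (R := ℝ) (φ := fun _ : Fin 3 => ℝ) j).fderiv
  rw [this]
  simp [Pi.single_apply]

lemma pd_comm {f : V3 → ℝ} (hf : ContDiff ℝ (⊤ : ℕ∞) f) (i j : Fin 3) (x : V3) :
    pd i (fun y => pd j f y) x = pd j (fun y => pd i f y) x := by
  have hd : ∀ y, HasFDerivAt f (fderiv ℝ f y) y := fun y =>
    (hf.differentiable (by simp) y).hasFDerivAt
  have hd2 : HasFDerivAt (fderiv ℝ f) (fderiv ℝ (fderiv ℝ f) x) x :=
    (((hf.fderiv_right (m := (⊤ : ℕ∞)) (by simp)).differentiable (by simp)) x).hasFDerivAt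
  have hsym := second_derivative_symmetric hd hd2 (Pi.single i 1) (Pi.single j 1)
  have key : ∀ (a : Fin 3) (v : V3), pd a (fun y => fderiv ℝ f y v) x
      = fderiv ℝ (fderiv ℝ f) x (Pi.single a 1) v := by
    intro a v
    unfold pd
    rw [fderiv_clm_apply (((hf.fderiv_right (m := (⊤ : ℕ∞)) (by simp)).differentiable (by simp)) x)
      (differentiableAt_const v)]
    simp
  calc pd i (fun y => pd j f y) x = fderiv ℝ (fderiv ℝ f) x (Pi.single i 1) (Pi.single j 1) :=
        key i (Pi.single j 1)
    _ = fderiv ℝ (fderiv ℝ f) x (Pi.single j 1) (Pi.single i 1) := hsym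
    _ = pd j (fun y => pd i f y) x := (key j (Pi.single i 1)).symm

lemma cd_lap {f : V3 → ℝ} (hf : ContDiff ℝ (⊤ : ℕ∞) f) : ContDiff ℝ (⊤ : ℕ∞) (lapF f) :=
  ContDiff.sum fun i _ => cd_pd (cd_pd hf i) i

lemma cd_dvg {v : V3 → V3} (hv : ContDiff ℝ (⊤ : ℕ∞) v) : ContDiff ℝ (⊤ : ℕ∞) (dvgF v) :=
  ContDiff.sum fun i _ => cd_pd (contDiff_pi.1 hv i) i

lemma lap_add {f g : V3 → ℝ} (hf : ContDiff ℝ (⊤ : ℕ∞) f) (hg : ContDiff ℝ (⊤ : ℕ∞) g) (x : V3) :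
    lapF (fun y => f y + g y) x = lapF f x + lapF g x := by
  unfold lapF
  have e1 : ∀ (i : Fin 3) y, pd i (fun z => f z + g z) y = pd i f y + pd i g y :=
    fun i y => pd_add (hf.differentiable (by simp)) (hg.differentiable (by simp)) i y
  simp only [e1]
  have e2 : ∀ (i : Fin 3), pd i (fun y => pd i f y + pd i g y) x
      = pd i (fun y => pd i f y) x + pd i (fun y => pd i g y) x :=
    fun i => pd_add ((cd_pd hf i).differentiable (by simp)) ((cd_pd hg i).differentiable (by simp)) i x
  simp only [e2]
  exact Finset.sum_add_distrib

lemma lap_sub {f g : V3 → ℝ} (hf : ContDiff ℝ (⊤ : ℕ∞) f) (hg : ContDiff ℝ (⊤ : ℕ∞) g) (x : V3) :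
    lapF (fun y => f y - g y) x = lapF f x - lapF g x := by
  unfold lapF
  have e1 : ∀ (i : Fin 3) y, pd i (fun z => f z - g z) y = pd i f y - pd i g y :=
    fun i y => pd_sub (hf.differentiable (by simp)) (hg.differentiable (by simp)) i y
  simp only [e1]
  have e2 : ∀ (i : Fin 3), pd i (fun y => pd i f y - pd i g y) x
      = pd i (fun y => pd i f y) x - pd i (fun y => pd i g y) x :=
    fun i => pd_sub ((cd_pd hf i).differentiable (by simp)) ((cd_pd hg i).differentiable (by simp)) i x
  simp only [e2]
  exact Finset.sum_sub_distrib _ _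

lemma lap_const_mul {f : V3 → ℝ} (hf : ContDiff ℝ (⊤ : ℕ∞) f) (c : ℝ) (x : V3) :
    lapF (fun y => c * f y) x = c * lapF f x := by
  unfold lapF
  have e1 : ∀ (i : Fin 3) y, pd i (fun z => c * f z) y = c * pd i f y :=
    fun i y => pd_const_mul (hf.differentiable (by simp)) c i y
  simp only [e1]
  have e2 : ∀ (i : Fin 3), pd i (fun y => c * pd i f y) x = c * pd i (fun y => pd i f y) x :=
    fun i => pd_const_mul ((cd_pd hf i).differentiable (by simp)) c i x
  simp only [e2]
  exact (Finset.mul_sum _ _ _).symm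

lemma lap_const (c : ℝ) (x : V3) : lapF (fun _ => c) x = 0 := by
  simp [lapF, pd_const]

lemma lap_sum {f : Fin 3 → V3 → ℝ} (hf : ∀ j, ContDiff ℝ (⊤ : ℕ∞) (f j)) (x : V3) :
    lapF (fun y => ∑ j, f j y) x = ∑ j, lapF (f j) x := by
  unfold lapF
  have e1 : ∀ (i : Fin 3) y, pd i (fun z => ∑ j, f j z) y = ∑ j, pd i (f j) y :=
    fun i y => pd_sum (fun j => (hf j).differentiable (by simp)) i y
  simp only [e1]
  have e2 : ∀ (i : Fin 3), pd i (fun y => ∑ j, pd i (f j) y) x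
      = ∑ j, pd i (pd i (f j)) x :=
    fun i => pd_sum (fun j => (cd_pd (hf j) i).differentiable (by simp)) i x
  simp only [e2]
  exact Finset.sum_comm

lemma lap_pd {f : V3 → ℝ} (hf : ContDiff ℝ (⊤ : ℕ∞) f) (i : Fin 3) (x : V3) :
    lapF (pd i f) x = pd i (lapF f) x := by
  unfold lapF
  have e1 : ∀ (j : Fin 3) y, pd j (pd i f) y = pd i (pd j f) y :=
    fun j y => pd_comm hf j i y
  simp only [e1]
  have e2 : ∀ (j : Fin 3), pd j (fun y => pd i (pd j f) y) x
      = pd i (fun y => pd j (pd j f) y) x :=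
    fun j => pd_comm (cd_pd hf j) j i x
  simp only [e2]
  exact (pd_sum (fun j => (cd_pd (cd_pd hf j) j).differentiable (by simp)) i x).symm

lemma lap_dvg {v : V3 → V3} (hv : ContDiff ℝ (⊤ : ℕ∞) v) (x : V3) :
    lapF (dvgF v) x = dvgF (vlapF v) x := by
  have h := lap_sum (f := fun j => pd j (fun y => v y j))
    (fun j => cd_pd (contDiff_pi.1 hv j) j) x
  refine h.trans ?_
  refine Finset.sum_congr rfl fun j _ => ?_
  exact lap_pd (contDiff_pi.1 hv j) j x

lemma lap_coord_mul {f : V3 → ℝ} (hf : ContDiff ℝ (⊤ : ℕ∞) f) (i : Fin 3) (x : V3) :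
    lapF (fun y => y i * f y) x = 2 * pd i f x + x i * lapF f x := by
  unfold lapF
  have hdf := hf.differentiable (by simp)
  have hdc : ∀ j : Fin 3, Differentiable ℝ (fun y : V3 => y j) := by
    intro j
    exact (ContinuousLinearMap.proj (R := ℝ) (φ := fun _ : Fin 3 => ℝ) j).differentiable
  have e1 : ∀ (j : Fin 3) y, pd j (fun z => z i * f z) y
      = y i * pd j f y + (if i = j then 1 else 0) * f y := by
    intro j y
    rw [pd_mul (hdc i) hdf j y, pd_coord j i y]
    ring
  simp only [e1]
  have e2 : ∀ (j : Fin 3), pd j (fun y => y i * pd j f y + (if i = j then 1 else 0) * f y) x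
      = (x i * pd j (pd j f) x + (if i = j then 1 else 0) * pd j f x)
        + (if i = j then 1 else 0) * pd j f x := by
    intro j
    have hpj := (cd_pd hf j).differentiable (by simp)
    rw [pd_add ((hdc i).fun_mul hpj) (hdf.const_mul _) j x, pd_mul (hdc i) hpj j x,
      pd_const_mul hdf _ j x, pd_coord j i x]
    ring
  simp only [e2]
  have hsum : ∑ j : Fin 3, (if i = j then 1 else 0) * pd j f x = pd i f x := by
    simp
  rw [Finset.sum_add_distrib, Finset.sum_add_distrib, hsum]
  have : ∑ j : Fin 3, x i * pd j (pd j f) x = x i * ∑ j : Fin 3, pd j (fun y => pd j f y) x :=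
    (Finset.mul_sum _ _ _).symm
  rw [this]
  ring

lemma curl_curl {v : V3 → V3} (hv : ContDiff ℝ (⊤ : ℕ∞) v) (x : V3) :
    curlF (curlF v) x = gradF (dvgF v) x - vlapF v x := by
  have hvi : ∀ i : Fin 3, ContDiff ℝ (⊤ : ℕ∞) (fun y => v y i) := fun i => contDiff_pi.1 hv i
  have hd : ∀ (i j : Fin 3), Differentiable ℝ (pd j (fun z => v z i)) :=
    fun i j => (cd_pd (hvi i) j).differentiable (by simp)
  have edv : dvgF v = fun y => pd 0 (fun z => v z 0) y + pd 1 (fun z => v z 1) y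
      + pd 2 (fun z => v z 2) y := by
    funext y; simp [dvgF, Fin.sum_univ_three]
  have elap : ∀ c : Fin 3, lapF (fun z => v z c) x
      = pd 0 (fun y => pd 0 (fun z => v z c) y) x + pd 1 (fun y => pd 1 (fun z => v z c) y) x
        + pd 2 (fun y => pd 2 (fun z => v z c) y) x := fun c => by
    simp [lapF, Fin.sum_univ_three]
  have e0 : (fun y => curlF v y 0) = fun y => pd 1 (fun z => v z 2) y - pd 2 (fun z => v z 1) y := by
    funext y; simp [curlF]
  have e1 : (fun y => curlF v y 1) = fun y => pd 2 (fun z => v z 0) y - pd 0 (fun z => v z 2) y := by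
    funext y; simp [curlF]
  have e2 : (fun y => curlF v y 2) = fun y => pd 0 (fun z => v z 1) y - pd 1 (fun z => v z 0) y := by
    funext y; simp [curlF]
  funext i
  fin_cases i
  · show pd 1 (fun y => curlF v y 2) x - pd 2 (fun y => curlF v y 1) x
      = pd 0 (dvgF v) x - lapF (fun z => v z 0) x
    rw [e2, e1, pd_sub (hd 1 0) (hd 0 1) 1 x, pd_sub (hd 0 2) (hd 2 0) 2 x, edv,
      pd_add (((hd 0 0).fun_add (hd 1 1))) (hd 2 2) 0 x, pd_add (hd 0 0) (hd 1 1) 0 x, elap 0,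
      pd_comm (hvi 1) 1 0 x, pd_comm (hvi 2) 2 0 x]
    ring
  · show pd 2 (fun y => curlF v y 0) x - pd 0 (fun y => curlF v y 2) x
      = pd 1 (dvgF v) x - lapF (fun z => v z 1) x
    rw [e0, e2, pd_sub (hd 2 1) (hd 1 2) 2 x, pd_sub (hd 1 0) (hd 0 1) 0 x, edv,
      pd_add (((hd 0 0).fun_add (hd 1 1))) (hd 2 2) 1 x, pd_add (hd 0 0) (hd 1 1) 1 x, elap 1,
      pd_comm (hvi 2) 2 1 x, pd_comm (hvi 0) 0 1 x]
    ring
  · show pd 0 (fun y => curlF v y 1) x - pd 1 (fun y => curlF v y 0) x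
      = pd 2 (dvgF v) x - lapF (fun z => v z 2) x
    rw [e1, e0, pd_sub (hd 0 2) (hd 2 0) 0 x, pd_sub (hd 2 1) (hd 1 2) 1 x, edv,
      pd_add (((hd 0 0).fun_add (hd 1 1))) (hd 2 2) 2 x, pd_add (hd 0 0) (hd 1 1) 2 x, elap 2,
      pd_comm (hvi 0) 0 2 x, pd_comm (hvi 1) 1 2 x]
    ring
/-- Completeness direction of the Papkovich–Neuber representation in SGET:
the PN displacement solves the equilibrium equation with body force `b`. -/
theorem stmt10 (μ ν l₁ l₂ : ℝ) (hμ : 0 < μ) (hν₁ : -1 < ν) (hν₂ : ν < 1/2)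
    (b Bc Bg : V3 → V3) (φc φg : V3 → ℝ)
    (hb : ContDiff ℝ (⊤ : ℕ∞) b) (hBc : ContDiff ℝ (⊤ : ℕ∞) Bc) (hBg : ContDiff ℝ (⊤ : ℕ∞) Bg)
    (hφc : ContDiff ℝ (⊤ : ℕ∞) φc) (hφg : ContDiff ℝ (⊤ : ℕ∞) φg)
    (h1 : ∀ x, vlapF Bc x = -(1/μ) • b x)
    (h2 : ∀ x, lapF φc x = (∑ i, x i * b x i) / μ
                + 2 * l₁^2 * (1 - 2*ν) * dvgF b x / μ)
    (h3 : ∀ x, hV (l₂^2) Bg x = -(l₂^2/μ) • b x)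
    (h4 : ∀ x, dvgF Bg x = 0)
    (h5 : ∀ x, hS (l₁^2) φg x = -l₁^2 * ((1 - 2*ν)/(2*(1-ν))) * dvgF b x / μ)
    (u : V3 → V3)
    (hu : u = fun x => Bc x
        - (1/(4*(1-ν))) • gradF (fun y => (∑ i, y i * Bc y i) + φc y) x
        + Bg x + l₁^2 • gradF φg x) :
    ∀ x, (2*(1-ν)/(1-2*ν)) • hV (l₁^2) (gradF (dvgF u)) x
        - hV (l₂^2) (curlF (curlF u)) x = -(1/μ) • b x := by
  have hν3 : (1:ℝ) - ν ≠ 0 := (by linarith : (0:ℝ) < 1 - ν).ne'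
  have hν4 : (1:ℝ) - 2*ν ≠ 0 := (by linarith : (0:ℝ) < 1 - 2*ν).ne'
  have hμ0 : μ ≠ 0 := ne_of_gt hμ
  have hcoord : ∀ i : Fin 3, ContDiff ℝ (⊤ : ℕ∞) (fun y : V3 => y i) :=
    fun i => contDiff_pi.1 contDiff_id i
  have hbi : ∀ i : Fin 3, ContDiff ℝ (⊤ : ℕ∞) (fun y => b y i) := fun i => contDiff_pi.1 hb i
  have hBci : ∀ i : Fin 3, ContDiff ℝ (⊤ : ℕ∞) (fun y => Bc y i) := fun i => contDiff_pi.1 hBc i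
  have hBgi : ∀ i : Fin 3, ContDiff ℝ (⊤ : ℕ∞) (fun y => Bg y i) := fun i => contDiff_pi.1 hBg i
  set ψ : V3 → ℝ := fun y => (∑ i, y i * Bc y i) + φc y with hψdef
  have hψs : ContDiff ℝ (⊤ : ℕ∞) (fun y : V3 => ∑ i, y i * Bc y i) :=
    ContDiff.sum fun i _ => (hcoord i).mul (hBci i)
  have hψ : ContDiff ℝ (⊤ : ℕ∞) ψ := by rw [hψdef]; exact hψs.add hφc
  have hui : ∀ i : Fin 3, (fun y => u y i)
      = fun y => Bc y i - (1/(4*(1-ν))) * pd i ψ y + Bg y i + l₁^2 * pd i φg y := by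
    intro i; funext y; rw [hu]; simp [gradF]
  have hup : ∀ i : Fin 3, ContDiff ℝ (⊤ : ℕ∞) (fun y => u y i) := by
    intro i; rw [hui i]
    exact (((hBci i).sub (contDiff_const.mul (cd_pd hψ i))).add (hBgi i)).add
      (contDiff_const.mul (cd_pd hφg i))
  have hus : ContDiff ℝ (⊤ : ℕ∞) u := contDiff_pi.2 hup
  have EvBc : ∀ (i : Fin 3) (y : V3), lapF (fun z => Bc z i) y = -(1/μ) * b y i := by
    intro i y
    have h := congrFun (h1 y) i
    simp only [vlapF, Pi.smul_apply, smul_eq_mul] at h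
    exact h
  have ElapBc : ∀ y, lapF (dvgF Bc) y = -(1/μ) * dvgF b y := by
    intro y
    rw [lap_dvg hBc y]
    show (∑ j, pd j (fun z => vlapF Bc z j) y) = -(1/μ) * dvgF b y
    have e : ∀ (j : Fin 3) (z : V3), vlapF Bc z j = -(1/μ) * b z j := fun j z => EvBc j z
    simp only [e]
    have e2 : ∀ j : Fin 3, pd j (fun z => -(1/μ) * b z j) y
        = -(1/μ) * pd j (fun z => b z j) y :=
      fun j => pd_const_mul ((hbi j).differentiable (by simp)) _ j y
    simp only [e2]
    exact (Finset.mul_sum _ _ _).symm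
  have F0 : ∀ y, lapF ψ y = 2 * dvgF Bc y + 2*l₁^2*(1-2*ν) * dvgF b y / μ := by
    intro y
    rw [hψdef, lap_add hψs hφc y, lap_sum (fun i => (hcoord i).mul (hBci i)) y, h2 y]
    have ec : ∀ i : Fin 3, lapF (fun z => z i * Bc z i) y
        = 2 * pd i (fun z => Bc z i) y + y i * (-(1/μ) * b y i) := by
      intro i; rw [lap_coord_mul (hBci i) i y, EvBc i y]
    simp only [ec]
    rw [Finset.sum_add_distrib]
    have s1 : ∑ i : Fin 3, 2 * pd i (fun z => Bc z i) y = 2 * dvgF Bc y :=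
      (Finset.mul_sum _ _ _).symm
    have s2 : ∑ i : Fin 3, y i * (-(1/μ) * b y i) = -(1/μ) * ∑ i : Fin 3, y i * b y i := by
      rw [Finset.mul_sum]; exact Finset.sum_congr rfl fun i _ => by ring
    rw [s1, s2]
    field_simp
    ring
  have F1 : ∀ y, l₁^2 * lapF φg y = φg y + l₁^2 * ((1-2*ν)/(2*(1-ν))) * dvgF b y / μ := by
    intro y
    have h := h5 y
    unfold hS at h
    linear_combination -h
  have Elapφg : ∀ (i : Fin 3) (y : V3), l₁^2 * pd i (lapF φg) y
      = pd i φg y + l₁^2*((1-2*ν)/(2*(1-ν)))/μ * pd i (dvgF b) y := by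
    intro i y
    rw [← pd_const_mul ((cd_lap hφg).differentiable (by simp)) (l₁^2) i y]
    have e2 : (fun z => l₁^2 * lapF φg z)
        = fun z => φg z + l₁^2*((1-2*ν)/(2*(1-ν)))/μ * dvgF b z := by
      funext z; rw [F1 z]; ring
    rw [e2, pd_add (hφg.differentiable (by simp))
        (((cd_dvg hb).differentiable (by simp)).const_mul _) i y,
      pd_const_mul ((cd_dvg hb).differentiable (by simp)) _ i y]
  have F2 : ∀ y, dvgF u y = (1-2*ν)/(2*(1-ν)) * dvgF Bc y + φg y := by
    intro y
    have e : ∀ i : Fin 3, pd i (fun z => u z i) y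
        = pd i (fun z => Bc z i) y - (1/(4*(1-ν))) * pd i (pd i ψ) y
          + pd i (fun z => Bg z i) y + l₁^2 * pd i (pd i φg) y := by
      intro i
      rw [hui i]
      have d1 : Differentiable ℝ (fun z : V3 => Bc z i) := (hBci i).differentiable (by simp)
      have d2 : Differentiable ℝ (pd i ψ) := (cd_pd hψ i).differentiable (by simp)
      have d3 : Differentiable ℝ (fun z : V3 => Bg z i) := (hBgi i).differentiable (by simp)
      have d4 : Differentiable ℝ (pd i φg) := (cd_pd hφg i).differentiable (by simp)
      rw [pd_add ((d1.fun_sub (d2.const_mul _)).fun_add d3) (d4.const_mul _) i y,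
          pd_add (d1.fun_sub (d2.const_mul _)) d3 i y,
          pd_sub d1 (d2.const_mul _) i y,
          pd_const_mul d2 _ i y, pd_const_mul d4 _ i y]
    show (∑ i, pd i (fun z => u z i) y) = _
    simp only [e]
    rw [Finset.sum_add_distrib, Finset.sum_add_distrib, Finset.sum_sub_distrib]
    have s1 : ∑ i : Fin 3, (1/(4*(1-ν))) * pd i (pd i ψ) y = (1/(4*(1-ν))) * lapF ψ y :=
      (Finset.mul_sum _ _ _).symm
    have s2 : ∑ i : Fin 3, l₁^2 * pd i (pd i φg) y = l₁^2 * lapF φg y :=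
      (Finset.mul_sum _ _ _).symm
    have s3 : (∑ i, pd i (fun z => Bg z i) y) = dvgF Bg y := rfl
    have s4 : (∑ i, pd i (fun z => Bc z i) y) = dvgF Bc y := rfl
    rw [s1, s2, F0 y, F1 y, s3, h4 y, s4]
    field_simp
    ring
  have Epddvgu : ∀ (i : Fin 3) (y : V3), pd i (dvgF u) y
      = (1-2*ν)/(2*(1-ν)) * pd i (dvgF Bc) y + pd i φg y := by
    intro i y
    have e : dvgF u = fun z => (1-2*ν)/(2*(1-ν)) * dvgF Bc z + φg z := funext F2
    rw [e, pd_add (((cd_dvg hBc).differentiable (by simp)).const_mul _)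
        (hφg.differentiable (by simp)) i y,
      pd_const_mul ((cd_dvg hBc).differentiable (by simp)) _ i y]
  have Elapdvgu : ∀ y, lapF (dvgF u) y
      = -((1-2*ν)/(2*(1-ν))/μ) * dvgF b y + lapF φg y := by
    intro y
    have e : dvgF u = fun z => (1-2*ν)/(2*(1-ν)) * dvgF Bc z + φg z := funext F2
    rw [e, lap_add (contDiff_const.mul (cd_dvg hBc)) hφg y,
      lap_const_mul (cd_dvg hBc) _ y, ElapBc y]
    ring
  have ecomp : ∀ (j : Fin 3) (z : V3),
      Bg z j = l₂^2 * lapF (fun w => Bg w j) z - l₂^2/μ * b z j := by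
    intro j z
    have h := congrFun (h3 z) j
    simp only [hV, vlapF, Pi.sub_apply, Pi.smul_apply, smul_eq_mul] at h
    linarith
  have F3 : ∀ y, l₂^2 * dvgF b y = 0 := by
    intro y
    have key : dvgF Bg y = l₂^2 * dvgF (vlapF Bg) y - l₂^2/μ * dvgF b y := by
      show (∑ j, pd j (fun z => Bg z j) y) = _
      have e : ∀ j : Fin 3, pd j (fun z => Bg z j) y
          = l₂^2 * pd j (fun z => lapF (fun w => Bg w j) z) y
            - l₂^2/μ * pd j (fun z => b z j) y := by
        intro j
        have efun : (fun z => Bg z j)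
            = fun z => l₂^2 * lapF (fun w => Bg w j) z - l₂^2/μ * b z j :=
          funext fun z => ecomp j z
        conv_lhs => rw [efun]
        rw [pd_sub (((cd_lap (hBgi j)).differentiable (by simp)).const_mul _)
            (((hbi j).differentiable (by simp)).const_mul _) j y,
          pd_const_mul ((cd_lap (hBgi j)).differentiable (by simp)) _ j y,
          pd_const_mul ((hbi j).differentiable (by simp)) _ j y]
      simp only [e]
      rw [Finset.sum_sub_distrib, ← Finset.mul_sum, ← Finset.mul_sum]
      rfl
    have hz : dvgF (vlapF Bg) y = 0 := by
      rw [← lap_dvg hBg y]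
      have e0 : dvgF Bg = fun _ => (0:ℝ) := funext h4
      rw [e0]
      exact lap_const 0 y
    rw [h4 y, hz, mul_zero] at key
    have h' : l₂^2/μ * dvgF b y = 0 := by linarith
    have h'' : l₂^2 * dvgF b y = μ * (l₂^2/μ * dvgF b y) := by field_simp
    rw [h'', h', mul_zero]
  have hD : ∀ (i : Fin 3) (x : V3), l₂^2 * pd i (dvgF b) x = 0 := by
    intro i x
    have hc := pd_const_mul ((cd_dvg hb).differentiable (by simp)) (l₂^2) i x
    have e : (fun y => l₂^2 * dvgF b y) = fun _ => (0:ℝ) := funext F3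
    rw [e, pd_const] at hc
    exact hc.symm
  have EBglap : ∀ (i : Fin 3) (x : V3), l₂^2 * lapF (lapF (fun z => Bg z i)) x
      = lapF (fun z => Bg z i) x + l₂^2/μ * lapF (fun z => b z i) x := by
    intro i x
    rw [← lap_const_mul (cd_lap (hBgi i)) (l₂^2) x]
    have e : (fun z => l₂^2 * lapF (fun w => Bg w i) z)
        = fun z => Bg z i + l₂^2/μ * b z i := by
      funext z
      have h := ecomp i z
      linarith
    rw [e, lap_add (hBgi i) (contDiff_const.mul (hbi i)) x, lap_const_mul (hbi i) _ x]
  have ElapdvgBcpd : ∀ (i : Fin 3) (x : V3),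
      lapF (pd i (dvgF Bc)) x = -(1/μ) * pd i (dvgF b) x := by
    intro i x
    rw [lap_pd (cd_dvg hBc) i x]
    have e : lapF (dvgF Bc) = fun z => -(1/μ) * dvgF b z := funext ElapBc
    rw [e, pd_const_mul ((cd_dvg hb).differentiable (by simp)) _ i x]
  have F4 : ∀ (i : Fin 3) (y : V3), lapF (fun z => u z i) y
      = -(1/μ) * b y i - (1/(2*(1-ν))) * pd i (dvgF Bc) y
        + lapF (fun z => Bg z i) y + pd i φg y := by
    intro i y
    rw [hui i]
    have c1 : ContDiff ℝ (⊤ : ℕ∞) (fun z : V3 => Bc z i) := hBci i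
    have c2 : ContDiff ℝ (⊤ : ℕ∞) (pd i ψ) := cd_pd hψ i
    have c3 : ContDiff ℝ (⊤ : ℕ∞) (fun z : V3 => Bg z i) := hBgi i
    have c4 : ContDiff ℝ (⊤ : ℕ∞) (pd i φg) := cd_pd hφg i
    rw [lap_add ((c1.sub (contDiff_const.mul c2)).add c3) (contDiff_const.mul c4) y,
        lap_add (c1.sub (contDiff_const.mul c2)) c3 y,
        lap_sub c1 (contDiff_const.mul c2) y,
        lap_const_mul c2 _ y, lap_const_mul c4 _ y,
        lap_pd hψ i y, lap_pd hφg i y, EvBc i y]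
    have eψ : lapF ψ = fun z => 2 * dvgF Bc z + 2*l₁^2*(1-2*ν)/μ * dvgF b z := by
      funext z; rw [F0 z]; ring
    have epψ : pd i (lapF ψ) y
        = 2 * pd i (dvgF Bc) y + 2*l₁^2*(1-2*ν)/μ * pd i (dvgF b) y := by
      rw [eψ, pd_add (((cd_dvg hBc).differentiable (by simp)).const_mul _)
          (((cd_dvg hb).differentiable (by simp)).const_mul _) i y,
        pd_const_mul ((cd_dvg hBc).differentiable (by simp)) _ i y,
        pd_const_mul ((cd_dvg hb).differentiable (by simp)) _ i y]
    rw [epψ, Elapφg i y]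
    field_simp
    ring
  have EW : curlF (curlF u) = fun y (i : Fin 3) => pd i (dvgF Bc) y + (1/μ) * b y i
      - lapF (fun z => Bg z i) y := by
    funext y i
    rw [curl_curl hus y]
    show pd i (dvgF u) y - lapF (fun z => u z i) y = _
    rw [Epddvgu i y, F4 i y]
    field_simp
    ring
  have T1 : ∀ (i : Fin 3) (x : V3), pd i (dvgF u) x - l₁^2 * lapF (pd i (dvgF u)) x
      = (1-2*ν)/(2*(1-ν)) * pd i (dvgF Bc) x := by
    intro i x
    rw [lap_pd (cd_dvg hus) i x, Epddvgu i x]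
    have hQ : l₁^2 * pd i (lapF (dvgF u)) x = pd i φg x := by
      have e : lapF (dvgF u) = fun z => -((1-2*ν)/(2*(1-ν))/μ) * dvgF b z + lapF φg z :=
        funext Elapdvgu
      rw [e, pd_add (((cd_dvg hb).differentiable (by simp)).const_mul _)
          ((cd_lap hφg).differentiable (by simp)) i x,
        pd_const_mul ((cd_dvg hb).differentiable (by simp)) _ i x, mul_add, Elapφg i x]
      ring
    rw [hQ]
    ring
  intro x
  funext i
  show (2*(1-ν)/(1-2*ν)) * (pd i (dvgF u) x - l₁^2 * lapF (pd i (dvgF u)) x)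
      - (curlF (curlF u) x i - l₂^2 * lapF (fun y => curlF (curlF u) y i) x)
      = -(1/μ) * b x i
  rw [T1 i x]
  simp only [EW]
  have hlapW : lapF (fun y => pd i (dvgF Bc) y + (1/μ) * b y i
        - lapF (fun z => Bg z i) y) x
      = -(1/μ) * pd i (dvgF b) x + (1/μ) * lapF (fun z => b z i) x
        - lapF (lapF (fun z => Bg z i)) x := by
    rw [lap_sub ((cd_pd (cd_dvg hBc) i).add (contDiff_const.mul (hbi i))) (cd_lap (hBgi i)) x,
        lap_add (cd_pd (cd_dvg hBc) i) (contDiff_const.mul (hbi i)) x,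
        lap_const_mul (hbi i) _ x, ElapdvgBcpd i x]
  rw [hlapW]
  have hα : (2*(1-ν)/(1-2*ν)) * ((1-2*ν)/(2*(1-ν))) = 1 := by field_simp
  have hBG := EBglap i x
  have hDD := hD i x
  linear_combination (pd i (dvgF Bc) x) * hα - hBG - (1/μ) * hDD
end Aux
end
end
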